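/- arXiv:1801.08691 — 2 statements merged into one kernel-verified Lean document; each statement's English description precedes it below -/
import Mathlib

section
/- Let h ∈ Γ₀(ℝ^N), let P be a symmetric positive definite N×N matrix, let u₁,…,u_r ∈ ℝ^N be linearly independent (r ≤ N), U = (u₁,…,u_r) ∈ ℝ^{N×r}, Q = U U^T, and set V = P + Q. Then for every x ∈ ℝ^N the map L : ℝ^r → ℝ^r defined by L(α) = U^T( x − prox^P_h( x − P^{-1} U α ) ) + α is Lipschitz continuous with Lipschitz constant 1 + ‖P^{-1/2} U‖², strongly monotone with modulus 1 (i.e. ⟨L(α) − L(β), α − β⟩ ≥ ‖α − β‖² for all α, β ∈ ℝ^r), has a unique zero α* ∈ ℝ^r, and prox^V_h(x) = prox^P_h( x − P^{-1} U α* ). -/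
/-!
`prox^P_h` is firmly nonexpansive in the metric `P`: `‖p₁ - p₂‖²_P ≤ ⟨p₁ - p₂, w₁ - w₂⟩_P`.
At the arguments `x - P⁻¹Uα`, `x - P⁻¹Uβ` the difference `w₁ - w₂` is `-P⁻¹U(α - β)`, so with
`e = P^{1/2}(p₁ - p₂)` and `A = P^{-1/2}U` this reads `‖e‖² ≤ -⟨e, A(α - β)⟩`, while
`L α - L β = (α - β) - Aᵀe`. Cauchy–Schwarz then gives `‖e‖ ≤ ‖A‖‖α - β‖`, hence the Lipschitz
bound, while `⟨L α - L β, α - β⟩ = ‖α - β‖² - ⟨e, A(α - β)⟩ ≥ ‖α - β‖² + ‖e‖²`.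
A Lipschitz, strongly monotone map has a unique zero, because `α ↦ α - γ L α` is a contraction
for small `γ > 0`. Finally, the prox is characterised by a variational inequality, and
`L α* = 0` makes `P(w - p) = V(x - p)` for `w = x - P⁻¹Uα*`, so the inequality for
`p = prox^P_h w` is the one for `prox^V_h x`.
-/

open Matrix

noncomputable section

/-- Euclidean norm `‖x‖ = √⟨x,x⟩` on `ℝ^N` (inner product `⟨x,y⟩ = ∑ i, x i * y i`). -/
def euNorm {N : ℕ} (x : Fin N → ℝ) : ℝ := Real.sqrt (x ⬝ᵥ x)

/-- `p` is the proximal point of `h` at `x` in the metric induced by `V`, i.e. `p`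
minimizes `z ↦ h z + (1/2)‖x - z‖²_V` (with `‖w‖²_V = ⟨w, V w⟩`). -/
def IsProxPt {N : ℕ} (V : Matrix (Fin N) (Fin N) ℝ) (h : (Fin N → ℝ) → EReal)
    (x p : Fin N → ℝ) : Prop :=
  ∀ z : Fin N → ℝ,
    h p + ((1 / 2 * ((x - p) ⬝ᵥ (V *ᵥ (x - p))) : ℝ) : EReal) ≤
      h z + ((1 / 2 * ((x - z) ⬝ᵥ (V *ᵥ (x - z))) : ℝ) : EReal)

/-- `h` belongs to `Γ₀(ℝ^N)`: proper, never `-∞`, lower semicontinuous and convex. -/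
def Gamma0 {N : ℕ} (h : (Fin N → ℝ) → EReal) : Prop :=
  (∃ z, h z ≠ ⊤) ∧ (∀ z, h z ≠ ⊥) ∧ LowerSemicontinuous h ∧
    ∀ x y : Fin N → ℝ, ∀ t : ℝ, 0 ≤ t → t ≤ 1 →
      h (t • x + (1 - t) • y) ≤ (t : EReal) * h x + ((1 - t : ℝ) : EReal) * h y

/-- The ℓ²→ℓ² operator norm of a matrix. -/
def matOpNorm {m n : ℕ} (A : Matrix (Fin m) (Fin n) ℝ) : ℝ :=
  ‖LinearMap.toContinuousLinearMap (Matrix.toEuclideanLin A)‖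

open scoped InnerProductSpace

section MatrixAlgebra

variable {m n R : Type*} [Fintype n]

lemma transpose_mulVec_dotProduct [Fintype m] [CommSemiring R] (A : Matrix m n R) (a : m → R)
    (b : n → R) : (Aᵀ *ᵥ a) ⬝ᵥ b = a ⬝ᵥ (A *ᵥ b) := by
  rw [dotProduct_mulVec, mulVec_transpose]

variable {S : Matrix n n ℝ}

lemma Matrix.IsHermitian.dotProduct_mulVec_comm (hS : S.IsHermitian) (a b : n → ℝ) :
    a ⬝ᵥ (S *ᵥ b) = b ⬝ᵥ (S *ᵥ a) := by
  rw [dotProduct_mulVec, ← mulVec_transpose, (isHermitian_iff_isSymm.mp hS).eq, dotProduct_comm]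

lemma Matrix.IsHermitian.dotProduct_mul_self_mulVec (hS : S.IsHermitian) (d : n → ℝ) :
    d ⬝ᵥ ((S * S) *ᵥ d) = (S *ᵥ d) ⬝ᵥ (S *ᵥ d) := by
  rw [← mulVec_mulVec, hS.dotProduct_mulVec_comm]

lemma Matrix.IsHermitian.transpose_inv_mul_mulVec_mulVec [DecidableEq n] (hS : S.IsHermitian)
    (hdet : IsUnit S.det) (U : Matrix n m ℝ) (d : n → ℝ) :
    (S⁻¹ * U)ᵀ *ᵥ (S *ᵥ d) = Uᵀ *ᵥ d := by
  rw [transpose_mul, transpose_nonsing_inv, (isHermitian_iff_isSymm.mp hS).eq, mulVec_mulVec,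
    Matrix.mul_assoc, nonsing_inv_mul _ hdet, Matrix.mul_one]

lemma isUnit_det_of_mul_self_eq [DecidableEq n] {P : Matrix n n ℝ} (hP : IsUnit P.det)
    (hSsq : S * S = P) : IsUnit S.det := by
  rw [← hSsq, det_mul] at hP
  exact isUnit_of_mul_isUnit_left hP

lemma dotProduct_mulVec_sub_smul (hS : S.IsHermitian) (a b : n → ℝ) (t : ℝ) :
    (a - t • b) ⬝ᵥ (S *ᵥ (a - t • b)) =
      a ⬝ᵥ (S *ᵥ a) - 2 * t * (a ⬝ᵥ (S *ᵥ b)) + t ^ 2 * (b ⬝ᵥ (S *ᵥ b)) := by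
  simp only [mulVec_sub, mulVec_smul, dotProduct_sub, sub_dotProduct, dotProduct_smul,
    smul_dotProduct, smul_eq_mul]
  linear_combination t * hS.dotProduct_mulVec_comm a b

end MatrixAlgebra

section Euclidean

variable {m n : ℕ}

lemma euNorm_eq_norm_toLp (v : Fin n → ℝ) : euNorm v = ‖WithLp.toLp 2 v‖ := by
  rw [euNorm, norm_eq_sqrt_real_inner, EuclideanSpace.inner_toLp_toLp, star_trivial]

lemma dotProduct_eq_inner_toLp (a b : Fin n → ℝ) :
    a ⬝ᵥ b = ⟪WithLp.toLp 2 a, WithLp.toLp 2 b⟫_ℝ := by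
  rw [EuclideanSpace.inner_toLp_toLp, star_trivial, dotProduct_comm]

lemma euNorm_nonneg (v : Fin n → ℝ) : 0 ≤ euNorm v := Real.sqrt_nonneg _

lemma euNorm_sq (v : Fin n → ℝ) : euNorm v ^ 2 = v ⬝ᵥ v := by
  rw [euNorm_eq_norm_toLp, dotProduct_eq_inner_toLp, real_inner_self_eq_norm_sq]

lemma euNorm_neg (v : Fin n → ℝ) : euNorm (-v) = euNorm v := by
  rw [euNorm, neg_dotProduct, dotProduct_neg, neg_neg, euNorm]

lemma euNorm_sub_le (a b : Fin n → ℝ) : euNorm (a - b) ≤ euNorm a + euNorm b := by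
  simpa only [euNorm_eq_norm_toLp, WithLp.toLp_sub] using norm_sub_le _ _

lemma dotProduct_le_euNorm_mul_euNorm (a b : Fin n → ℝ) : a ⬝ᵥ b ≤ euNorm a * euNorm b := by
  rw [dotProduct_eq_inner_toLp, euNorm_eq_norm_toLp, euNorm_eq_norm_toLp]
  exact real_inner_le_norm _ _

open scoped Matrix.Norms.L2Operator in
lemma matOpNorm_eq_norm (A : Matrix (Fin m) (Fin n) ℝ) : matOpNorm A = ‖A‖ := rfl

lemma matOpNorm_nonneg (A : Matrix (Fin m) (Fin n) ℝ) : 0 ≤ matOpNorm A := norm_nonneg _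

lemma euNorm_mulVec_le (A : Matrix (Fin m) (Fin n) ℝ) (v : Fin n → ℝ) :
    euNorm (A *ᵥ v) ≤ matOpNorm A * euNorm v := by
  rw [euNorm_eq_norm_toLp, euNorm_eq_norm_toLp, matOpNorm_eq_norm]
  exact Matrix.l2_opNorm_mulVec A (WithLp.toLp 2 v)

lemma matOpNorm_transpose (A : Matrix (Fin m) (Fin n) ℝ) : matOpNorm Aᵀ = matOpNorm A := by
  rw [matOpNorm_eq_norm, matOpNorm_eq_norm, ← conjTranspose_eq_transpose_of_trivial,
    Matrix.l2_opNorm_conjTranspose]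

lemma norm_eq_euNorm_ofLp (v : EuclideanSpace ℝ (Fin n)) : ‖v‖ = euNorm (WithLp.ofLp v) := by
  rw [euNorm_eq_norm_toLp, WithLp.toLp_ofLp]

lemma inner_eq_dotProduct_ofLp (u v : EuclideanSpace ℝ (Fin n)) :
    ⟪u, v⟫_ℝ = WithLp.ofLp u ⬝ᵥ WithLp.ofLp v := by
  rw [dotProduct_eq_inner_toLp, WithLp.toLp_ofLp, WithLp.toLp_ofLp]

lemma euNorm_le_of_dotProduct_self_le (A : Matrix (Fin m) (Fin n) ℝ) {δ : Fin n → ℝ}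
    {e : Fin m → ℝ} (he : e ⬝ᵥ e ≤ -(e ⬝ᵥ (A *ᵥ δ))) : euNorm e ≤ matOpNorm A * euNorm δ := by
  have hsq : euNorm e ^ 2 ≤ euNorm e * (matOpNorm A * euNorm δ) :=
    calc euNorm e ^ 2 = e ⬝ᵥ e := euNorm_sq e
      _ ≤ -e ⬝ᵥ (A *ᵥ δ) := by rwa [neg_dotProduct]
      _ ≤ euNorm (-e) * euNorm (A *ᵥ δ) := dotProduct_le_euNorm_mul_euNorm _ _
      _ ≤ euNorm e * (matOpNorm A * euNorm δ) := by
        rw [euNorm_neg]; exact mul_le_mul_of_nonneg_left (euNorm_mulVec_le A δ) (euNorm_nonneg e)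
  nlinarith [euNorm_nonneg e, mul_nonneg (matOpNorm_nonneg A) (euNorm_nonneg δ)]

lemma euNorm_sub_transpose_mulVec_le (A : Matrix (Fin m) (Fin n) ℝ) {δ : Fin n → ℝ}
    {e : Fin m → ℝ} (he : e ⬝ᵥ e ≤ -(e ⬝ᵥ (A *ᵥ δ))) :
    euNorm (δ - Aᵀ *ᵥ e) ≤ (1 + matOpNorm A ^ 2) * euNorm δ := by
  have hA := matOpNorm_nonneg A
  calc euNorm (δ - Aᵀ *ᵥ e) ≤ euNorm δ + euNorm (Aᵀ *ᵥ e) := euNorm_sub_le _ _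
    _ ≤ euNorm δ + matOpNorm A * euNorm e := by
      gcongr; simpa only [matOpNorm_transpose] using euNorm_mulVec_le Aᵀ e
    _ ≤ euNorm δ + matOpNorm A * (matOpNorm A * euNorm δ) := by
      gcongr; exact euNorm_le_of_dotProduct_self_le A he
    _ = (1 + matOpNorm A ^ 2) * euNorm δ := by ring

lemma dotProduct_self_le_sub_transpose_mulVec (A : Matrix (Fin m) (Fin n) ℝ) {δ : Fin n → ℝ}
    {e : Fin m → ℝ} (he : e ⬝ᵥ e ≤ -(e ⬝ᵥ (A *ᵥ δ))) : δ ⬝ᵥ δ ≤ (δ - Aᵀ *ᵥ e) ⬝ᵥ δ := by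
  rw [sub_dotProduct, transpose_mulVec_dotProduct]
  linarith [euNorm_sq e, sq_nonneg (euNorm e)]

end Euclidean

section StronglyMonotone

variable {E : Type*} [NormedAddCommGroup E] [InnerProductSpace ℝ E] [CompleteSpace E]

theorem existsUnique_zero_of_lipschitzWith_of_strongly_monotone {g : E → E} {C : NNReal} {μ : ℝ}
    (hμ : 0 < μ) (hg : LipschitzWith C g)
    (hmono : ∀ x y, μ * ‖x - y‖ ^ 2 ≤ ⟪g x - g y, x - y⟫_ℝ) : ∃! x, g x = 0 := by
  -- any `0 < γ < 2μ / C²` makes `x ↦ x - γ • g x` a contraction; this one also allows `C = 0`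
  set γ : ℝ := μ / (C ^ 2 + μ ^ 2)
  have hγ : 0 < γ := by positivity
  set c : ℝ := 1 - 2 * γ * μ + γ ^ 2 * C ^ 2
  have hc : c < 1 := by
    have : γ * C ^ 2 < 2 * μ := by
      rw [div_mul_eq_mul_div, div_lt_iff₀ (by positivity)]
      nlinarith [pow_pos hμ 3]
    nlinarith [mul_lt_mul_of_pos_left this hγ]
  set T : E → E := fun x => x - γ • g x
  have hT : ∀ x y, ‖T x - T y‖ ≤ √c * ‖x - y‖ := by
    intro x y
    have hTxy : T x - T y = (x - y) - γ • (g x - g y) := by simp only [T, smul_sub]; abel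
    have hgxy : ‖g x - g y‖ ≤ C * ‖x - y‖ := by
      simpa only [dist_eq_norm] using hg.dist_le_mul x y
    have hsq : ‖T x - T y‖ ^ 2 ≤ c * ‖x - y‖ ^ 2 := by
      rw [hTxy, norm_sub_sq_real, real_inner_smul_right, norm_smul, Real.norm_of_nonneg hγ.le,
        real_inner_comm]
      have hinner := mul_le_mul_of_nonneg_left (hmono x y) hγ.le
      have hnorm := mul_le_mul_of_nonneg_left
        (pow_le_pow_left₀ (norm_nonneg _) hgxy 2) (sq_nonneg γ)
      linarith
    rw [← Real.sqrt_sq (norm_nonneg (T x - T y)), ← Real.sqrt_sq (norm_nonneg (x - y)),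
      ← Real.sqrt_mul' _ (sq_nonneg _)]
    exact Real.sqrt_le_sqrt hsq
  have hTc : ContractingWith (⟨√c, Real.sqrt_nonneg c⟩ : NNReal) T :=
    ⟨NNReal.coe_lt_coe.mp ((Real.sqrt_lt' one_pos).2 (by rwa [one_pow])),
      LipschitzWith.of_dist_le_mul fun x y => by
        rw [dist_eq_norm, dist_eq_norm]; exact hT x y⟩
  have hfix : γ • g (hTc.fixedPoint T) = 0 := sub_eq_self.mp hTc.fixedPoint_isFixedPt
  have hzero := (smul_eq_zero.mp hfix).resolve_left hγ.ne'
  refine ⟨hTc.fixedPoint T, hzero, fun y hy => ?_⟩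
  have hle := hmono y (hTc.fixedPoint T)
  rw [hy, hzero, sub_zero, inner_zero_left] at hle
  simpa [sub_eq_zero] using nonpos_of_mul_nonpos_right hle hμ

end StronglyMonotone

theorem existsUnique_zero_of_euNorm_lipschitz {r : ℕ} {L : (Fin r → ℝ) → Fin r → ℝ} {C : ℝ}
    (hC : 0 ≤ C) (hlip : ∀ α β, euNorm (L α - L β) ≤ C * euNorm (α - β))
    (hmono : ∀ α β, (α - β) ⬝ᵥ (α - β) ≤ (L α - L β) ⬝ᵥ (α - β)) : ∃! α, L α = 0 := by
  have hg := existsUnique_zero_of_lipschitzWith_of_strongly_monotone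
    (g := fun v : EuclideanSpace ℝ (Fin r) => WithLp.toLp 2 (L (WithLp.ofLp v)))
    (C := ⟨C, hC⟩) one_pos
    (LipschitzWith.of_dist_le_mul fun x y => by
      simp only [dist_eq_norm, norm_eq_euNorm_ofLp, WithLp.ofLp_sub]
      exact hlip _ _)
    (fun x y => by
      simpa only [one_mul, ← euNorm_sq, inner_eq_dotProduct_ofLp, norm_eq_euNorm_ofLp,
        WithLp.ofLp_sub, WithLp.ofLp_toLp] using hmono _ _)
  exact (WithLp.equiv 2 (Fin r → ℝ)).existsUnique_congr (by simp) |>.mp hg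

lemma le_of_forall_le_add_mul {a b q : ℝ} (h : ∀ t : ℝ, 0 < t → t ≤ 1 → a ≤ b + t * q) :
    a ≤ b := by
  have hcont : Continuous fun t : ℝ => b + t * q := by fun_prop
  have hlim := (hcont.tendsto' 0 b (by simp)).mono_left (nhdsWithin_le_nhds (s := Set.Ioi 0))
  exact ge_of_tendsto hlim <| Filter.mem_of_superset (Ioc_mem_nhdsGT one_pos)
    fun t ht => h t ht.1 ht.2

section Prox

variable {N : ℕ} {h : (Fin N → ℝ) → EReal} {V : Matrix (Fin N) (Fin N) ℝ} {w p : Fin N → ℝ}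

lemma IsProxPt.ne_top (hp : IsProxPt V h w p) (hproper : ∃ z, h z ≠ ⊤) : h p ≠ ⊤ := by
  obtain ⟨z, hz⟩ := hproper
  intro htop
  have := hp z
  rw [htop, EReal.top_add_coe, top_le_iff] at this
  exact EReal.add_ne_top hz (EReal.coe_ne_top _) this

lemma IsProxPt.variational_ineq (hh : Gamma0 h) (hV : V.PosSemidef) (hp : IsProxPt V h w p)
    (z : Fin N → ℝ) : h p + (((w - p) ⬝ᵥ (V *ᵥ (z - p)) : ℝ) : EReal) ≤ h z := by
  obtain ⟨hproper, hbot, -, hconv⟩ := hh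
  rcases eq_or_ne (h z) ⊤ with hz | hz
  · simp [hz]
  obtain ⟨a, ha⟩ : ∃ a : ℝ, h p = a := ⟨_, (EReal.coe_toReal (hp.ne_top hproper) (hbot p)).symm⟩
  obtain ⟨b, hb⟩ : ∃ b : ℝ, h z = b := ⟨_, (EReal.coe_toReal hz (hbot z)).symm⟩
  rw [ha, hb, ← EReal.coe_add, EReal.coe_le_coe_iff]
  refine le_of_forall_le_add_mul (q := (z - p) ⬝ᵥ (V *ᵥ (z - p)) / 2) fun t ht ht1 => ?_
  have hseg : h (t • z + (1 - t) • p) ≤ ((t * b + (1 - t) * a : ℝ) : EReal) := by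
    have := hconv z p t ht.le ht1
    rw [ha, hb] at this
    exact_mod_cast this
  have hw : w - (t • z + (1 - t) • p) = (w - p) - t • (z - p) := by module
  have hmin := (hp (t • z + (1 - t) • p)).trans (add_le_add hseg le_rfl)
  rw [hw, dotProduct_mulVec_sub_smul hV.isHermitian, ha, ← EReal.coe_add, ← EReal.coe_add,
    EReal.coe_le_coe_iff] at hmin
  have : t * (a + (w - p) ⬝ᵥ (V *ᵥ (z - p))) ≤
      t * (b + t * ((z - p) ⬝ᵥ (V *ᵥ (z - p)) / 2)) := by linarith
  exact le_of_mul_le_mul_left this ht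

lemma isProxPt_of_variational_ineq (hV : V.PosSemidef)
    (hvi : ∀ z, h p + (((w - p) ⬝ᵥ (V *ᵥ (z - p)) : ℝ) : EReal) ≤ h z) : IsProxPt V h w p := by
  intro z
  set B := (w - p) ⬝ᵥ (V *ᵥ (z - p)) with hB
  set Q := 1 / 2 * ((w - p) ⬝ᵥ (V *ᵥ (w - p))) with hQ
  have hquad : Q - B ≤ 1 / 2 * ((w - z) ⬝ᵥ (V *ᵥ (w - z))) := by
    have hw : w - z = (w - p) - (1 : ℝ) • (z - p) := by module
    have hnonneg := hV.dotProduct_mulVec_nonneg (z - p)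
    rw [star_trivial] at hnonneg
    rw [hw, dotProduct_mulVec_sub_smul hV.isHermitian]
    linarith [hB, hQ]
  calc h p + (Q : EReal) = h p + B + ((Q - B : ℝ) : EReal) := by
        rw [add_assoc, ← EReal.coe_add, add_sub_cancel]
    _ ≤ h z + ((Q - B : ℝ) : EReal) := add_le_add (hvi z) le_rfl
    _ ≤ _ := add_le_add le_rfl (EReal.coe_le_coe_iff.2 hquad)

lemma IsProxPt.firmlyNonexpansive (hh : Gamma0 h) (hV : V.PosSemidef) {w₁ w₂ p₁ p₂ : Fin N → ℝ}
    (h₁ : IsProxPt V h w₁ p₁) (h₂ : IsProxPt V h w₂ p₂) :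
    (p₁ - p₂) ⬝ᵥ (V *ᵥ (p₁ - p₂)) ≤ (p₁ - p₂) ⬝ᵥ (V *ᵥ (w₁ - w₂)) := by
  have v₁ := h₁.variational_ineq hh hV p₂
  have v₂ := h₂.variational_ineq hh hV p₁
  obtain ⟨a₁, ha₁⟩ : ∃ a : ℝ, h p₁ = a :=
    ⟨_, (EReal.coe_toReal (h₁.ne_top hh.1) (hh.2.1 p₁)).symm⟩
  obtain ⟨a₂, ha₂⟩ : ∃ a : ℝ, h p₂ = a :=
    ⟨_, (EReal.coe_toReal (h₂.ne_top hh.1) (hh.2.1 p₂)).symm⟩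
  rw [ha₁, ha₂, ← EReal.coe_add, EReal.coe_le_coe_iff] at v₁ v₂
  rw [← neg_sub p₁ p₂, mulVec_neg, dotProduct_neg] at v₁
  have hsplit : (w₂ - p₂) ⬝ᵥ (V *ᵥ (p₁ - p₂)) - (w₁ - p₁) ⬝ᵥ (V *ᵥ (p₁ - p₂)) =
      (p₁ - p₂) ⬝ᵥ (V *ᵥ (p₁ - p₂)) - (w₁ - w₂) ⬝ᵥ (V *ᵥ (p₁ - p₂)) := by
    rw [← sub_dotProduct, ← sub_dotProduct]; congr 1; abel
  rw [hV.isHermitian.dotProduct_mulVec_comm (p₁ - p₂) (w₁ - w₂)]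
  linarith

theorem IsProxPt.firmlyNonexpansive_shift {r : ℕ} (hh : Gamma0 h) {P S : Matrix (Fin N) (Fin N) ℝ}
    (hP : P.PosDef) (hS : S.IsHermitian) (hSsq : S * S = P) {U : Matrix (Fin N) (Fin r) ℝ}
    {x p₁ p₂ : Fin N → ℝ} {α β : Fin r → ℝ} (h₁ : IsProxPt P h (x - P⁻¹ *ᵥ (U *ᵥ α)) p₁)
    (h₂ : IsProxPt P h (x - P⁻¹ *ᵥ (U *ᵥ β)) p₂) :
    (S *ᵥ (p₁ - p₂)) ⬝ᵥ (S *ᵥ (p₁ - p₂)) ≤ -((S *ᵥ (p₁ - p₂)) ⬝ᵥ ((S⁻¹ * U) *ᵥ (α - β))) := by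
  have hPdet := P.isUnit_iff_isUnit_det.mp hP.isUnit
  have hshift : P *ᵥ ((x - P⁻¹ *ᵥ (U *ᵥ α)) - (x - P⁻¹ *ᵥ (U *ᵥ β))) = -(U *ᵥ (α - β)) := by
    rw [sub_sub_sub_cancel_left, ← mulVec_sub, ← mulVec_sub, mulVec_mulVec,
      mul_nonsing_inv _ hPdet, one_mulVec, ← mulVec_neg, neg_sub]
  have := h₁.firmlyNonexpansive hh hP.posSemidef h₂
  rwa [hshift, dotProduct_neg, ← hSsq, hS.dotProduct_mul_self_mulVec,
    ← transpose_mulVec_dotProduct U,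
    ← hS.transpose_inv_mul_mulVec_mulVec (isUnit_det_of_mul_self_eq hPdet hSsq),
    transpose_mulVec_dotProduct] at this

theorem isProxPt_add_mul_transpose {r : ℕ} (hh : Gamma0 h) {P : Matrix (Fin N) (Fin N) ℝ}
    (hP : P.PosDef) {U : Matrix (Fin N) (Fin r) ℝ} {x : Fin N → ℝ} {α : Fin r → ℝ}
    (hp : IsProxPt P h (x - P⁻¹ *ᵥ (U *ᵥ α)) p) (hα : Uᵀ *ᵥ (x - p) + α = 0) :
    IsProxPt (P + U * Uᵀ) h x p := by
  have hUU : (U * Uᵀ).PosSemidef := by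
    simpa only [conjTranspose_eq_transpose_of_trivial] using posSemidef_self_mul_conjTranspose U
  have hV := hP.posSemidef.add hUU
  have hshift : P *ᵥ (x - P⁻¹ *ᵥ (U *ᵥ α) - p) = (P + U * Uᵀ) *ᵥ (x - p) := by
    rw [eq_neg_of_add_eq_zero_right hα, sub_right_comm, mulVec_sub, mulVec_mulVec,
      mul_nonsing_inv P (P.isUnit_iff_isUnit_det.mp hP.isUnit), one_mulVec, mulVec_neg,
      mulVec_mulVec, sub_neg_eq_add, add_mulVec]
  refine isProxPt_of_variational_ineq hV fun z => ?_
  have hvi := hp.variational_ineq hh hP.posSemidef z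
  rwa [hP.isHermitian.dotProduct_mulVec_comm, hshift, hV.isHermitian.dotProduct_mulVec_comm] at hvi

end Prox

theorem stmt_2_general {N r : ℕ}
    (h : (Fin N → ℝ) → EReal) (hh : Gamma0 h)
    (P : Matrix (Fin N) (Fin N) ℝ) (hP : P.PosDef)
    (U : Matrix (Fin N) (Fin r) ℝ)
    (S : Matrix (Fin N) (Fin N) ℝ) (hS : S.PosSemidef) (hSsq : S * S = P)
    (V : Matrix (Fin N) (Fin N) ℝ) (hV : V = P + U * Uᵀ)
    (proxP : (Fin N → ℝ) → (Fin N → ℝ))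
    (hproxP : ∀ w : Fin N → ℝ, IsProxPt P h w (proxP w))
    (x : Fin N → ℝ)
    (L : (Fin r → ℝ) → (Fin r → ℝ))
    (hL : ∀ α : Fin r → ℝ, L α = Uᵀ *ᵥ (x - proxP (x - P⁻¹ *ᵥ (U *ᵥ α))) + α) :
    (∀ α β : Fin r → ℝ,
        euNorm (L α - L β) ≤ (1 + matOpNorm (S⁻¹ * U) ^ 2) * euNorm (α - β)) ∧
    (∀ α β : Fin r → ℝ, (L α - L β) ⬝ᵥ (α - β) ≥ (α - β) ⬝ᵥ (α - β)) ∧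
    (∃! αs : Fin r → ℝ, L αs = 0) ∧
    (∀ αs : Fin r → ℝ, L αs = 0 →
        IsProxPt V h x (proxP (x - P⁻¹ *ᵥ (U *ᵥ αs)))) := by
  have hSdet := isUnit_det_of_mul_self_eq (P.isUnit_iff_isUnit_det.mp hP.isUnit) hSsq
  set p := fun α => proxP (x - P⁻¹ *ᵥ (U *ᵥ α))
  set A := S⁻¹ * U
  have hfirm : ∀ α β, (S *ᵥ (p α - p β)) ⬝ᵥ (S *ᵥ (p α - p β)) ≤
      -((S *ᵥ (p α - p β)) ⬝ᵥ (A *ᵥ (α - β))) := fun α β =>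
    (hproxP _).firmlyNonexpansive_shift hh hP hS.isHermitian hSsq (hproxP _)
  have hLsub : ∀ α β, L α - L β = (α - β) - Aᵀ *ᵥ (S *ᵥ (p α - p β)) := by
    intro α β
    rw [hL, hL, hS.isHermitian.transpose_inv_mul_mulVec_mulVec hSdet]
    simp only [mulVec_sub]; abel
  have hlip : ∀ α β, euNorm (L α - L β) ≤ (1 + matOpNorm A ^ 2) * euNorm (α - β) :=
    fun α β => hLsub α β ▸ euNorm_sub_transpose_mulVec_le A (hfirm α β)
  have hmono : ∀ α β, (α - β) ⬝ᵥ (α - β) ≤ (L α - L β) ⬝ᵥ (α - β) :=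
    fun α β => hLsub α β ▸ dotProduct_self_le_sub_transpose_mulVec A (hfirm α β)
  refine ⟨hlip, hmono, existsUnique_zero_of_euNorm_lipschitz (by positivity) hlip hmono,
    fun αs hαs => ?_⟩
  rw [hV]
  exact isProxPt_add_mul_transpose hh hP (hproxP _) ((hL αs).symm.trans hαs)

/-- Proximity operator in the metric `V = P + U Uᵀ` (rank-`r` update,
`U` with linearly independent columns): the map
`L(α) = Uᵀ(x - prox^P_h(x - P⁻¹ U α)) + α` is Lipschitz with constant
`1 + ‖P^{-1/2} U‖²`, strongly monotone with modulus `1`, has a unique zero `α*`, and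
`prox^V_h(x) = prox^P_h(x - P⁻¹ U α*)`.  (`S` is the principal square root of `P`.) -/
theorem stmt_2 {N r : ℕ} (hr : r ≤ N)
    (h : (Fin N → ℝ) → EReal) (hh : Gamma0 h)
    (P : Matrix (Fin N) (Fin N) ℝ) (hP : P.PosDef)
    (U : Matrix (Fin N) (Fin r) ℝ)
    (hU : LinearIndependent ℝ (fun j : Fin r => fun i : Fin N => U i j))
    (S : Matrix (Fin N) (Fin N) ℝ) (hS : S.PosSemidef) (hSsq : S * S = P)
    (V : Matrix (Fin N) (Fin N) ℝ) (hV : V = P + U * Uᵀ)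
    (proxP : (Fin N → ℝ) → (Fin N → ℝ))
    (hproxP : ∀ w : Fin N → ℝ, IsProxPt P h w (proxP w))
    (x : Fin N → ℝ)
    (L : (Fin r → ℝ) → (Fin r → ℝ))
    (hL : ∀ α : Fin r → ℝ, L α = Uᵀ *ᵥ (x - proxP (x - P⁻¹ *ᵥ (U *ᵥ α))) + α) :
    (∀ α β : Fin r → ℝ,
        euNorm (L α - L β) ≤ (1 + matOpNorm (S⁻¹ * U) ^ 2) * euNorm (α - β)) ∧
    (∀ α β : Fin r → ℝ, (L α - L β) ⬝ᵥ (α - β) ≥ (α - β) ⬝ᵥ (α - β)) ∧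
    (∃! αs : Fin r → ℝ, L αs = 0) ∧
    (∀ αs : Fin r → ℝ, L αs = 0 →
        IsProxPt V h x (proxP (x - P⁻¹ *ᵥ (U *ᵥ αs)))) :=
  stmt_2_general h hh P hP U S hS hSsq V hV proxP hproxP x L hL
end
end

section
/- Let h ∈ Γ₀(ℝ^N) be separable, h(x) = Σ_{i=1}^N h_i(x_i) with each h_i ∈ Γ₀(ℝ), let D be a diagonal N×N matrix with strictly positive diagonal entries d₁,…,d_N, let u ∈ ℝ^N, and assume V = D + u u^T (respectively V = D − u u^T) is symmetric positive definite. Then for every x ∈ ℝ^N, the i-th component of prox^V_h(x) equals prox_{h_i/d_i}( x_i − α* u_i/d_i ) (respectively x_i + α* u_i/d_i), where α* is the unique real root of L(α) = Σ_{i=1}^N u_i ( x_i − prox_{h_i/d_i}( x_i ∓ α u_i/d_i ) ) + α (sign − for V = D + u u^T, sign + for V = D − u u^T), and L is Lipschitz continuous and strongly increasing on ℝ. -/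
open Matrix

noncomputable section

/-- `p` is the proximal point of `g : ℝ → EReal` at `t`, i.e. the minimizer of
`s ↦ g s + (1/2)(t - s)²`. -/
def IsProxPt1 (g : ℝ → EReal) (t p : ℝ) : Prop :=
  ∀ s : ℝ, g p + ((1 / 2 * (t - p) ^ 2 : ℝ) : EReal) ≤
    g s + ((1 / 2 * (t - s) ^ 2 : ℝ) : EReal)

/-- `g` belongs to `Γ₀(ℝ)`. -/
def Gamma0R (g : ℝ → EReal) : Prop :=
  (∃ s, g s ≠ ⊤) ∧ (∀ s, g s ≠ ⊥) ∧ LowerSemicontinuous g ∧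
    ∀ a b t : ℝ, 0 ≤ t → t ≤ 1 →
      g (t * a + (1 - t) * b) ≤ (t : EReal) * g a + ((1 - t : ℝ) : EReal) * g b

/-!
Each scalar prox is firmly nonexpansive, so `α ↦ uᵢ · proxᵢ(xᵢ - ε α uᵢ / dᵢ)` is Lipschitz with
constant `|ε| uᵢ² / dᵢ` and, when `ε > 0`, antitone. Hence `L` is Lipschitz and strongly
increasing with modulus `min 1 (1 + ε ∑ uᵢ² / dᵢ)`, which is positive because the quadratic form
of `V = D + ε u uᵀ` at `D⁻¹u` equals `S (1 + ε S)` with `S = ∑ uᵢ² / dᵢ`; so `L` has a unique root.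
At a root `α`, the point `p` with `pᵢ = proxᵢ(tᵢ)`, `tᵢ = xᵢ - ε α uᵢ / dᵢ`, satisfies
`V (x - p) = (dᵢ (tᵢ - pᵢ))ᵢ` because `α = -⟨u, x - p⟩`. Summing the scalar subgradient
inequalities `hᵢ(pᵢ) + dᵢ (tᵢ - pᵢ)(zᵢ - pᵢ) ≤ hᵢ(zᵢ)` gives `h p + ⟨V (x - p), z - p⟩ ≤ h z`,
and this subgradient inequality in the `V`-metric makes `p` the `V`-prox of `h` at `x`.
-/

open Filter Topology

lemma le_of_forall_mem_Ioc_le_add_mul {a b k : ℝ} (h : ∀ l ∈ Set.Ioc (0 : ℝ) 1, a ≤ b + l * k) :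
    a ≤ b := by
  have hlim : Tendsto (fun l : ℝ => b + l * k) (𝓝[>] 0) (𝓝 b) := by
    have hcont : Continuous (fun l : ℝ => b + l * k) := by fun_prop
    simpa using (hcont.tendsto 0).mono_left nhdsWithin_le_nhds
  exact ge_of_tendsto hlim (eventually_of_mem (Ioc_mem_nhdsGT one_pos) h)

def FirmlyNonexpansive (Q : ℝ → ℝ) : Prop :=
  ∀ s t, (Q s - Q t) ^ 2 ≤ (Q s - Q t) * (s - t)

lemma FirmlyNonexpansive.abs_sub_le {Q : ℝ → ℝ} (hQ : FirmlyNonexpansive Q) (s t : ℝ) :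
    |Q s - Q t| ≤ |s - t| := by
  have h := hQ s t
  nlinarith [sq_abs (Q s - Q t), abs_nonneg (s - t), abs_nonneg (Q s - Q t),
    le_abs_self ((Q s - Q t) * (s - t)), abs_mul (Q s - Q t) (s - t)]

lemma FirmlyNonexpansive.abs_mul_sub_le {Q : ℝ → ℝ} (hQ : FirmlyNonexpansive Q)
    {d : ℝ} (hd : 0 < d) (x u ε a b : ℝ) :
    |u * (Q (x - ε * a * u / d) - Q (x - ε * b * u / d))| ≤ |ε| * (u ^ 2 / d) * |a - b| := by
  have hlip := hQ.abs_sub_le (x - ε * a * u / d) (x - ε * b * u / d)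
  calc |u * (Q (x - ε * a * u / d) - Q (x - ε * b * u / d))|
      ≤ |u| * |(x - ε * a * u / d) - (x - ε * b * u / d)| := by
        rw [abs_mul]; exact mul_le_mul_of_nonneg_left hlip (abs_nonneg u)
    _ = |ε| * (u ^ 2 / d) * |a - b| := by
        rw [show (x - ε * a * u / d) - (x - ε * b * u / d) = -(ε * (a - b) * u / d) by ring,
          abs_neg, abs_div, abs_mul, abs_mul, abs_of_pos hd, ← sq_abs u]
        ring

lemma FirmlyNonexpansive.mul_mul_sub_nonpos {Q : ℝ → ℝ} (hQ : FirmlyNonexpansive Q)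
    {d : ℝ} (hd : 0 < d) (x u ε a b : ℝ) :
    ε * ((a - b) * (u * (Q (x - ε * a * u / d) - Q (x - ε * b * u / d)))) ≤ 0 := by
  have hfirm := mul_le_mul_of_nonneg_left (hQ (x - ε * a * u / d) (x - ε * b * u / d)) hd.le
  set Δ := Q (x - ε * a * u / d) - Q (x - ε * b * u / d)
  rw [show d * (Δ * ((x - ε * a * u / d) - (x - ε * b * u / d))) =
    -(ε * ((a - b) * (u * Δ))) by field_simp; ring] at hfirm
  nlinarith [mul_nonneg hd.le (sq_nonneg Δ)]

section ScalarProx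

variable {g : ℝ → EReal} {c t p : ℝ}

lemma IsProxPt1.add_mul_le (hbot : ∀ s, g s ≠ ⊥)
    (hconv : ∀ a b l : ℝ, 0 ≤ l → l ≤ 1 →
      g (l * a + (1 - l) * b) ≤ (l : EReal) * g a + ((1 - l : ℝ) : EReal) * g b)
    (hc : 0 < c) (hp : IsProxPt1 (fun s => ((c⁻¹ : ℝ) : EReal) * g s) t p) (s : ℝ) :
    g p + ((c * (t - p) * (s - p) : ℝ) : EReal) ≤ g s := by
  obtain hs | hs := eq_or_ne (g s) ⊤
  · simp [hs]
  obtain ⟨S, hS⟩ : ∃ S : ℝ, g s = S := ⟨_, (EReal.coe_toReal hs (hbot s)).symm⟩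
  have hpt : g p ≠ ⊤ := by
    intro hpt
    have h := hp s
    simp only [hpt, hS, EReal.coe_mul_top_of_pos (inv_pos.2 hc), EReal.top_add_coe,
      ← EReal.coe_mul, ← EReal.coe_add, top_le_iff] at h
    exact EReal.coe_ne_top _ h
  obtain ⟨P, hP⟩ : ∃ P : ℝ, g p = P := ⟨_, (EReal.coe_toReal hpt (hbot p)).symm⟩
  rw [hP, hS, ← EReal.coe_add, EReal.coe_le_coe_iff]
  -- test the prox inequality at `l * s + (1 - l) * p` and let `l → 0`
  refine le_of_forall_mem_Ioc_le_add_mul (k := c / 2 * (s - p) ^ 2) fun l ⟨hl0, hl1⟩ => ?_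
  have hmid : g (l * s + (1 - l) * p) ≤ ((l * S + (1 - l) * P : ℝ) : EReal) := by
    simpa only [hS, hP, EReal.coe_add, EReal.coe_mul] using hconv s p l hl0.le hl1
  have h := (hp (l * s + (1 - l) * p)).trans
    (add_le_add_left (mul_le_mul_of_nonneg_left hmid (EReal.coe_nonneg.2 (inv_pos.2 hc).le)) _)
  simp only [hP, ← EReal.coe_mul, ← EReal.coe_add, EReal.coe_le_coe_iff] at h
  refine le_of_mul_le_mul_left ?_ hl0
  have h' := mul_le_mul_of_nonneg_left h hc.le
  field_simp at h'
  nlinarith [h']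

lemma firmlyNonexpansive_of_isProxPt1 {P : ℝ → ℝ} (hfin : ∃ s, g s ≠ ⊤) (hbot : ∀ s, g s ≠ ⊥)
    (hconv : ∀ a b l : ℝ, 0 ≤ l → l ≤ 1 →
      g (l * a + (1 - l) * b) ≤ (l : EReal) * g a + ((1 - l : ℝ) : EReal) * g b)
    (hc : 0 < c) (hP : ∀ t, IsProxPt1 (fun s => ((c⁻¹ : ℝ) : EReal) * g s) t (P t)) :
    FirmlyNonexpansive P := by
  intro t₁ t₂
  obtain ⟨s₀, hs₀⟩ := hfin
  have ne_top_of_le {a b : EReal} {r : ℝ} (hab : a + (r : EReal) ≤ b) (hb : b ≠ ⊤) : a ≠ ⊤ :=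
    fun ha => hb (top_le_iff.1 (by simpa [ha] using hab))
  have hsub₁ := (hP t₁).add_mul_le hbot hconv hc (P t₂)
  have hsub₂ := (hP t₂).add_mul_le hbot hconv hc (P t₁)
  have hP₁ : g (P t₁) ≠ ⊤ := ne_top_of_le ((hP t₁).add_mul_le hbot hconv hc s₀) hs₀
  have hP₂ : g (P t₂) ≠ ⊤ := ne_top_of_le hsub₂ hP₁
  rw [← EReal.coe_toReal hP₁ (hbot _), ← EReal.coe_toReal hP₂ (hbot _), ← EReal.coe_add,
    EReal.coe_le_coe_iff] at hsub₁ hsub₂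
  nlinarith

end ScalarProx

section RootFunction

variable {N : ℕ}

def proxRootFun (P : Fin N → ℝ → ℝ) (d u x : Fin N → ℝ) (ε α : ℝ) : ℝ :=
  (∑ i, u i * (x i - P i (x i - ε * α * u i / d i))) + α

lemma proxRootFun_sub (P : Fin N → ℝ → ℝ) (d u x : Fin N → ℝ) (ε a b : ℝ) :
    proxRootFun P d u x ε a - proxRootFun P d u x ε b =
      (a - b) - ∑ i, u i * (P i (x i - ε * a * u i / d i) - P i (x i - ε * b * u i / d i)) := by
  simp only [proxRootFun, mul_sub, Finset.sum_sub_distrib]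
  ring

variable {P : Fin N → ℝ → ℝ} {d u x : Fin N → ℝ} {ε : ℝ}

lemma abs_proxRootFun_sub_le (hP : ∀ i, FirmlyNonexpansive (P i)) (hd : ∀ i, 0 < d i)
    (a b : ℝ) :
    |proxRootFun P d u x ε a - proxRootFun P d u x ε b| ≤
      (1 + |ε| * ∑ i, u i ^ 2 / d i) * |a - b| := by
  rw [proxRootFun_sub]
  calc |(a - b) - ∑ i, u i * (P i (x i - ε * a * u i / d i) - P i (x i - ε * b * u i / d i))|
      ≤ |a - b| + ∑ i, |u i * (P i (x i - ε * a * u i / d i) - P i (x i - ε * b * u i / d i))| :=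
        (abs_sub _ _).trans (add_le_add_right (Finset.abs_sum_le_sum_abs _ _) _)
    _ ≤ |a - b| + ∑ i, |ε| * (u i ^ 2 / d i) * |a - b| := by
        gcongr with i
        exact (hP i).abs_mul_sub_le (hd i) _ _ _ _ _
    _ = (1 + |ε| * ∑ i, u i ^ 2 / d i) * |a - b| := by
        rw [← Finset.sum_mul, ← Finset.mul_sum]; ring

lemma min_mul_sq_le_proxRootFun_sub_mul (hP : ∀ i, FirmlyNonexpansive (P i)) (hd : ∀ i, 0 < d i)
    (a b : ℝ) :
    min 1 (1 + ε * ∑ i, u i ^ 2 / d i) * (a - b) ^ 2 ≤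
      (proxRootFun P d u x ε a - proxRootFun P d u x ε b) * (a - b) := by
  set m : Fin N → ℝ := fun i =>
    (a - b) * (u i * (P i (x i - ε * a * u i / d i) - P i (x i - ε * b * u i / d i)))
  have hsub : (proxRootFun P d u x ε a - proxRootFun P d u x ε b) * (a - b) =
      (a - b) ^ 2 - ∑ i, m i := by
    rw [proxRootFun_sub, sub_mul, Finset.sum_mul, sq]
    exact congrArg _ (Finset.sum_congr rfl fun i _ => mul_comm _ _)
  rw [hsub]
  obtain hε | hε := lt_or_ge 0 ε
  · have hm : ∀ i, m i ≤ 0 := fun i =>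
      nonpos_of_mul_nonpos_right ((hP i).mul_mul_sub_nonpos (hd i) _ _ _ _ _) hε
    nlinarith [(Finset.sum_nonpos fun i _ => hm i : ∑ i, m i ≤ 0),
      min_le_left 1 (1 + ε * ∑ i, u i ^ 2 / d i), sq_nonneg (a - b)]
  · have hm : ∀ i, m i ≤ -ε * (u i ^ 2 / d i) * (a - b) ^ 2 := fun i => by
      calc m i
          ≤ |a - b| * |u i * (P i (x i - ε * a * u i / d i) - P i (x i - ε * b * u i / d i))| :=
            (le_abs_self _).trans (abs_mul _ _).le
        _ ≤ |a - b| * (|ε| * (u i ^ 2 / d i) * |a - b|) :=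
            mul_le_mul_of_nonneg_left ((hP i).abs_mul_sub_le (hd i) _ _ _ _ _) (abs_nonneg _)
        _ = -ε * (u i ^ 2 / d i) * (a - b) ^ 2 := by
            rw [abs_of_nonpos hε, ← sq_abs (a - b)]; ring
    have hsum : ∑ i, m i ≤ -ε * (∑ i, u i ^ 2 / d i) * (a - b) ^ 2 := by
      rw [Finset.mul_sum, Finset.sum_mul]
      exact Finset.sum_le_sum fun i _ => hm i
    nlinarith [min_le_right 1 (1 + ε * ∑ i, u i ^ 2 / d i), sq_nonneg (a - b)]

end RootFunction

lemma existsUnique_eq_zero_of_strongMono {f : ℝ → ℝ} (hf : Continuous f) {c : ℝ} (hc : 0 < c)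
    (hmono : ∀ a b, c * (a - b) ^ 2 ≤ (f a - f b) * (a - b)) : ∃! a, f a = 0 := by
  have htop : Tendsto f atTop atTop := by
    refine tendsto_atTop_mono' atTop ?_
      (tendsto_atTop_add_const_left _ (f 0) (tendsto_id.const_mul_atTop hc))
    filter_upwards [eventually_gt_atTop 0] with a ha
    have := hmono a 0
    rw [sub_zero] at this
    show f 0 + c * a ≤ f a
    nlinarith
  have hbot : Tendsto f atBot atBot := by
    refine tendsto_atBot_mono' atBot ?_
      (tendsto_atBot_add_const_left _ (f 0) (tendsto_id.const_mul_atBot hc))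
    filter_upwards [eventually_lt_atBot 0] with a ha
    have := hmono a 0
    rw [sub_zero] at this
    show f a ≤ f 0 + c * a
    nlinarith
  obtain ⟨a, ha⟩ := hf.surjective htop hbot 0
  refine ⟨a, ha, fun b hb => ?_⟩
  have := hmono b a
  rw [ha, hb, sub_self, zero_mul] at this
  have hsq : (b - a) ^ 2 = 0 := le_antisymm (nonpos_of_mul_nonpos_right this hc) (sq_nonneg _)
  exact sub_eq_zero.1 (pow_eq_zero_iff two_ne_zero |>.1 hsq)

lemma diagonal_add_smul_vecMulVec_mulVec {n R : Type*} [Fintype n] [DecidableEq n] [CommRing R]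
    (d u w : n → R) (ε : R) :
    (diagonal d + ε • vecMulVec u u) *ᵥ w = fun i => d i * w i + ε * (u ⬝ᵥ w) * u i := by
  ext i
  simp [add_mulVec, smul_mulVec, vecMulVec_mulVec, mulVec_diagonal, mul_assoc]

lemma one_add_mul_sum_sq_div_pos {N : ℕ} {d u : Fin N → ℝ} {ε : ℝ} (hd : ∀ i, 0 < d i)
    (hV : (diagonal d + ε • vecMulVec u u).PosDef) : 0 < 1 + ε * ∑ i, u i ^ 2 / d i := by
  set S := ∑ i, u i ^ 2 / d i
  obtain rfl | hu := eq_or_ne u 0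
  · simp [S]
  have hw : (fun i => u i / d i) ≠ 0 := fun hw =>
    hu (funext fun i => (div_eq_zero_iff.1 (congrFun hw i)).resolve_right (hd i).ne')
  have hdot : u ⬝ᵥ (fun i => u i / d i) = S := Finset.sum_congr rfl fun i _ => by ring
  have hVw : (diagonal d + ε • vecMulVec u u) *ᵥ (fun i => u i / d i) = (1 + ε * S) • u := by
    rw [diagonal_add_smul_vecMulVec_mulVec, hdot]
    ext i
    simp only [Pi.smul_apply, smul_eq_mul]
    field_simp [(hd i).ne']
  have hquad := hV.dotProduct_mulVec_pos hw
  rw [star_trivial, hVw, dotProduct_smul, dotProduct_comm, hdot, smul_eq_mul] at hquad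
  exact pos_of_mul_pos_left hquad (Finset.sum_nonneg fun i _ => div_nonneg (sq_nonneg _) (hd i).le)

lemma Matrix.PosSemidef.half_dotProduct_mulVec_le {n : Type*} [Fintype n] {V : Matrix n n ℝ}
    (hV : V.PosSemidef) (a b : n → ℝ) :
    1 / 2 * (a ⬝ᵥ (V *ᵥ a)) ≤ (V *ᵥ a) ⬝ᵥ b + 1 / 2 * ((a - b) ⬝ᵥ (V *ᵥ (a - b))) := by
  have hq := hV.dotProduct_mulVec_nonneg b
  have hsymm : a ⬝ᵥ (V *ᵥ b) = (V *ᵥ a) ⬝ᵥ b := by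
    rw [dotProduct_mulVec, ← mulVec_transpose, ← conjTranspose_eq_transpose_of_trivial,
      hV.isHermitian.eq]
  rw [star_trivial] at hq
  rw [mulVec_sub, dotProduct_sub, sub_dotProduct, sub_dotProduct, hsymm,
    dotProduct_comm b (V *ᵥ a)]
  linarith

lemma isProxPt_of_le_add_dotProduct {N : ℕ} {V : Matrix (Fin N) (Fin N) ℝ} (hV : V.PosSemidef)
    {h : (Fin N → ℝ) → EReal} {x p : Fin N → ℝ}
    (hsub : ∀ z, h p + (((V *ᵥ (x - p)) ⬝ᵥ (z - p) : ℝ) : EReal) ≤ h z) : IsProxPt V h x p := by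
  intro z
  have hreal := hV.half_dotProduct_mulVec_le (x - p) (z - p)
  rw [sub_sub_sub_cancel_right] at hreal
  calc h p + ((1 / 2 * ((x - p) ⬝ᵥ (V *ᵥ (x - p))) : ℝ) : EReal)
      ≤ h p + (((V *ᵥ (x - p)) ⬝ᵥ (z - p) : ℝ) : EReal) +
          ((1 / 2 * ((x - z) ⬝ᵥ (V *ᵥ (x - z))) : ℝ) : EReal) := by
        rw [add_assoc, ← EReal.coe_add]
        exact add_le_add_right (EReal.coe_le_coe_iff.2 hreal) _
    _ ≤ h z + ((1 / 2 * ((x - z) ⬝ᵥ (V *ᵥ (x - z))) : ℝ) : EReal) :=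
        add_le_add_left (hsub z) _

lemma sum_add_dotProduct_le {N : ℕ} {g : Fin N → ℝ → EReal} {w p z : Fin N → ℝ}
    (h : ∀ i, g i (p i) + ((w i * (z i - p i) : ℝ) : EReal) ≤ g i (z i)) :
    (∑ i, g i (p i)) + ((w ⬝ᵥ (z - p) : ℝ) : EReal) ≤ ∑ i, g i (z i) := by
  have hcoe : ((w ⬝ᵥ (z - p) : ℝ) : EReal) = ∑ i, ((w i * (z i - p i) : ℝ) : EReal) :=
    map_sum (⟨⟨Real.toEReal, EReal.coe_zero⟩, EReal.coe_add⟩ : ℝ →+ EReal) _ _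
  rw [hcoe, ← Finset.sum_add_distrib]
  exact Finset.sum_le_sum fun i _ => h i

lemma isProxPt_of_proxRootFun_eq_zero {N : ℕ} {g : Fin N → ℝ → EReal} {P : Fin N → ℝ → ℝ}
    {d u x : Fin N → ℝ} {ε α : ℝ} (hd : ∀ i, d i ≠ 0)
    (hV : (diagonal d + ε • vecMulVec u u).PosSemidef)
    (hsub : ∀ i t s, g i (P i t) + ((d i * (t - P i t) * (s - P i t) : ℝ) : EReal) ≤ g i s)
    (hα : proxRootFun P d u x ε α = 0) :
    IsProxPt (diagonal d + ε • vecMulVec u u) (fun z => ∑ i, g i (z i)) x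
      (fun i => P i (x i - ε * α * u i / d i)) := by
  set p : Fin N → ℝ := fun i => P i (x i - ε * α * u i / d i)
  have hup : u ⬝ᵥ (x - p) = -α := by
    simp only [proxRootFun] at hα
    simp only [dotProduct, Pi.sub_apply, p]
    linarith
  have hVxp : (diagonal d + ε • vecMulVec u u) *ᵥ (x - p) =
      fun i => d i * (x i - ε * α * u i / d i - p i) := by
    rw [diagonal_add_smul_vecMulVec_mulVec, hup]
    ext i
    rw [Pi.sub_apply]
    field_simp [hd i]
    ring
  refine isProxPt_of_le_add_dotProduct hV fun z => ?_
  rw [hVxp]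
  exact sum_add_dotProduct_le fun i => hsub i _ (z i)

theorem stmt_6_general {N : ℕ} (hi : Fin N → ℝ → EReal) (hhi : ∀ i, Gamma0R (hi i))
    (h : (Fin N → ℝ) → EReal) (hsep : ∀ z : Fin N → ℝ, h z = ∑ i, hi i (z i))
    (d : Fin N → ℝ) (hd : ∀ i, 0 < d i)
    (u : Fin N → ℝ)
    (ε : ℝ)
    (V : Matrix (Fin N) (Fin N) ℝ)
    (hV : V = Matrix.diagonal d + ε • vecMulVec u u) (hVpd : V.PosDef)
    (proxi : Fin N → ℝ → ℝ)
    (hproxi : ∀ i : Fin N, ∀ t : ℝ,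
      IsProxPt1 (fun s => (((d i)⁻¹ : ℝ) : EReal) * hi i s) t (proxi i t))
    (x : Fin N → ℝ)
    (L : ℝ → ℝ)
    (hL : ∀ α : ℝ,
      L α = (∑ i, u i * (x i - proxi i (x i - ε * α * u i / d i))) + α) :
    (∃! αs : ℝ, L αs = 0) ∧
    (∀ αs : ℝ, L αs = 0 →
      IsProxPt V h x (fun i => proxi i (x i - ε * αs * u i / d i))) ∧
    (∃ K : ℝ, ∀ a b : ℝ, |L a - L b| ≤ K * |a - b|) ∧
    (∃ c : ℝ, 0 < c ∧ ∀ a b : ℝ, (L a - L b) * (a - b) ≥ c * (a - b) ^ 2) := by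
  obtain rfl : L = proxRootFun proxi d u x ε := funext hL
  obtain rfl : h = fun z => ∑ i, hi i (z i) := funext hsep
  subst hV
  have hfirm : ∀ i, FirmlyNonexpansive (proxi i) :=
    fun i => firmlyNonexpansive_of_isProxPt1 (hhi i).1 (hhi i).2.1 (hhi i).2.2.2 (hd i)
      (hproxi i)
  have hsub := fun i t s => (hproxi i t).add_mul_le (hhi i).2.1 (hhi i).2.2.2 (hd i) s
  have hc := lt_min one_pos (one_add_mul_sum_sq_div_pos hd hVpd)
  have hmono := min_mul_sq_le_proxRootFun_sub_mul (u := u) (x := x) (ε := ε) hfirm hd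
  have hlip := abs_proxRootFun_sub_le (u := u) (x := x) (ε := ε) hfirm hd
  refine ⟨existsUnique_eq_zero_of_strongMono ?_ hc hmono,
    fun α hα => isProxPt_of_proxRootFun_eq_zero (fun i => (hd i).ne') hVpd.posSemidef hsub hα,
    ⟨_, hlip⟩, ⟨_, hc, hmono⟩⟩
  exact (LipschitzWith.of_dist_le' fun a b => by
    simpa only [Real.dist_eq] using hlip a b).continuous

/-- Separable case: for `h(x) = ∑ᵢ hᵢ(xᵢ)` and `V = D ± u uᵀ` SPD
(`ε = 1` for `+`, `ε = -1` for `-`), the `i`-th component of `prox^V_h(x)` is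
`prox_{hᵢ/dᵢ}(xᵢ ∓ α* uᵢ/dᵢ)`, where `α*` is the unique root of
`L(α) = ∑ᵢ uᵢ(xᵢ - prox_{hᵢ/dᵢ}(xᵢ ∓ α uᵢ/dᵢ)) + α`, and `L` is Lipschitz
continuous and strongly increasing. -/
theorem stmt_6 {N : ℕ} (hi : Fin N → ℝ → EReal) (hhi : ∀ i, Gamma0R (hi i))
    (h : (Fin N → ℝ) → EReal) (hsep : ∀ z : Fin N → ℝ, h z = ∑ i, hi i (z i))
    (d : Fin N → ℝ) (hd : ∀ i, 0 < d i)
    (u : Fin N → ℝ)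
    (ε : ℝ) (hε : ε = 1 ∨ ε = -1)
    (V : Matrix (Fin N) (Fin N) ℝ)
    (hV : V = Matrix.diagonal d + ε • vecMulVec u u) (hVpd : V.PosDef)
    (proxi : Fin N → ℝ → ℝ)
    (hproxi : ∀ i : Fin N, ∀ t : ℝ,
      IsProxPt1 (fun s => (((d i)⁻¹ : ℝ) : EReal) * hi i s) t (proxi i t))
    (x : Fin N → ℝ)
    (L : ℝ → ℝ)
    (hL : ∀ α : ℝ,
      L α = (∑ i, u i * (x i - proxi i (x i - ε * α * u i / d i))) + α) :
    (∃! αs : ℝ, L αs = 0) ∧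
    (∀ αs : ℝ, L αs = 0 →
      IsProxPt V h x (fun i => proxi i (x i - ε * αs * u i / d i))) ∧
    (∃ K : ℝ, ∀ a b : ℝ, |L a - L b| ≤ K * |a - b|) ∧
    (∃ c : ℝ, 0 < c ∧ ∀ a b : ℝ, (L a - L b) * (a - b) ≥ c * (a - b) ^ 2) :=
  stmt_6_general hi hhi h hsep d hd u ε V hV hVpd proxi hproxi x L hL
end
end
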